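/- There exist absolute constants c, C > 0 such that for all finitely supported real sequences b = {b_I} and β = {β_I}, c · ‖{b_I β_I}‖_Carl ≤ ‖P^{1,0}_b P^{σ,0,1}_β‖_{E,2→2} ≤ C · ‖{b_I β_I}‖_Carl, where σ ranges over independent uniform ±1 random signs. -/

import Mathlib

open MeasureTheory ProbabilityTheory Real Filter
open scoped ENNReal

attribute [local instance] Classical.propDecidable

noncomputable section

namespace RandomParaproducts

/-- Dyadic intervals: `(n, k)` represents `[k·2ⁿ, (k+1)·2ⁿ)`. -/
abbrev D : Type := ℤ × ℤ

/-- The length `2ⁿ` of the dyadic interval `(n, k)`. -/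
def len (I : D) : ℝ := (2 : ℝ) ^ I.1

/-- The dyadic interval `[k·2ⁿ, (k+1)·2ⁿ)` as a subset of `ℝ`. -/
def ival (I : D) : Set ℝ := Set.Ico ((I.2 : ℝ) * (2 : ℝ) ^ I.1) (((I.2 : ℝ) + 1) * (2 : ℝ) ^ I.1)

/-- The left half of a dyadic interval. -/
def lc (I : D) : D := (I.1 - 1, 2 * I.2)

/-- The right half of a dyadic interval. -/
def rc (I : D) : D := (I.1 - 1, 2 * I.2 + 1)

/-- The `L²`-normalized Haar function `h_I = h⁰_I`. -/
def haar (I : D) : ℝ → ℝ := fun x =>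
  (Real.sqrt (len I))⁻¹ *
    ((ival (rc I)).indicator (fun _ => (1 : ℝ)) x - (ival (lc I)).indicator (fun _ => (1 : ℝ)) x)

/-- The function `h¹_I = |h_I| = |I|^{-1/2} 1_I`. -/
def haar1 (I : D) : ℝ → ℝ := fun x =>
  (Real.sqrt (len I))⁻¹ * (ival I).indicator (fun _ => (1 : ℝ)) x

/-- `h^ε_I`, where `false` codes the exponent `0` and `true` codes the exponent `1`. -/
def hfun : Bool → D → ℝ → ℝ
  | false => haar
  | true => haar1

/-- The inner product `⟨f, g⟩ = ∫ f g` on `L²(ℝ)`. -/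
def ip (f g : ℝ → ℝ) : ℝ := ∫ x, f x * g x

/-- The paraproduct `P^{ε,δ}_b f = ∑_I b_I ⟨f, h^δ_I⟩ h^ε_I` with finitely supported
numerical symbol `b`. -/
def P (e d : Bool) (b : D →₀ ℝ) (f : ℝ → ℝ) : ℝ → ℝ := fun x =>
  ∑ I ∈ b.support, b I * ip f (hfun d I) * hfun e I x

/-- The signed paraproduct `P^{σ,ε,δ}_b f = ∑_I σ_I b_I ⟨f, h^δ_I⟩ h^ε_I`. -/
def Psig (σ : D → ℝ) (e d : Bool) (b : D →₀ ℝ) (f : ℝ → ℝ) : ℝ → ℝ := fun x =>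
  ∑ I ∈ b.support, σ I * (b I * ip f (hfun d I) * hfun e I x)

/-- The square of the `L²(ℝ)` norm, `‖g‖₂² = ∫ g²`. -/
def l2normSq (g : ℝ → ℝ) : ℝ := ∫ x, (g x) ^ 2

/-- The Carleson norm of a sequence `a` whose nonzero entries lie in the finite set `s`:
`sup_J (|J|⁻¹ ∑_{I ⊆ J} a_I² |I|)^{1/2}`. -/
def carlOn (s : Finset D) (a : D → ℝ) : ℝ :=
  ⨆ J : D, Real.sqrt ((len J)⁻¹ *
    ∑ I ∈ s.filter (fun I => ival I ⊆ ival J), (a I) ^ 2 * len I)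

/-- `μ` is the law of independent uniformly distributed random signs `{σ_I : I ∈ 𝒟}`. -/
def IsSignMeasure (μ : Measure (D → ℝ)) : Prop :=
  IsProbabilityMeasure μ ∧
    iIndepFun (m := fun _ : D => (inferInstance : MeasurableSpace ℝ)) (fun I σ => σ I) μ ∧
    ∀ I : D, μ.map (fun σ => σ I) =
      (2⁻¹ : ℝ≥0∞) • (Measure.dirac (1 : ℝ) + Measure.dirac (-1 : ℝ))

/-- `f` is a unit vector of `L²(ℝ)`. -/
def UnitL2 (f : ℝ → ℝ) : Prop := MemLp f 2 volume ∧ eLpNorm f 2 volume = 1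

/-- The operator norm on `L²(ℝ)` of a map defined on functions. -/
def opNorm (T : (ℝ → ℝ) → ℝ → ℝ) : ℝ :=
  ⨆ f : {f : ℝ → ℝ // UnitL2 f}, Real.sqrt (l2normSq (T f.1))

/-- The averaged operator norm `sup_{‖f‖₂ = 1} (𝔼 ‖T_σ f‖₂²)^{1/2}`. -/
def avgOpNorm (μ : Measure (D → ℝ)) (T : (D → ℝ) → (ℝ → ℝ) → ℝ → ℝ) : ℝ :=
  ⨆ f : {f : ℝ → ℝ // UnitL2 f}, Real.sqrt (∫ σ, l2normSq (T σ f.1) ∂μ)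

/-- `b` is the finite linear combination of Haar functions with coefficients `c`. -/
def FinHaar (b : ℝ → ℝ) (c : D →₀ ℝ) : Prop :=
  b = fun x => ∑ I ∈ c.support, c I * haar I x

/-- The paraproduct `P^{ε,γ}_{b,α} f = ∑_{I} (⟨b, h^α_I⟩/|I|^{1/2}) ⟨f, h^γ_I⟩ h^ε_I` with
function symbol `b`, the sum extended over a finite set `s` containing all the
nonvanishing terms. -/
def Pb (s : Finset D) (e g a : Bool) (b : ℝ → ℝ) (f : ℝ → ℝ) : ℝ → ℝ := fun x =>
  ∑ I ∈ s, (ip b (hfun a I) / Real.sqrt (len I)) * ip f (hfun g I) * hfun e I x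

lemma measurableSet_ival (I : D) : MeasurableSet (ival I) := measurableSet_Ico

lemma volume_ival_ne_top (I : D) : volume (ival I) ≠ ⊤ := by
  simp only [ival, Real.volume_Ico]; exact ENNReal.ofReal_ne_top

lemma memℒp_haar (I : D) : MemLp (haar I) 2 volume := by
  have h1 : MemLp ((ival (rc I)).indicator (fun _ => (1 : ℝ))) 2 volume :=
    memLp_indicator_const 2 (measurableSet_ival _) 1 (Or.inr (volume_ival_ne_top _))
  have h2 : MemLp ((ival (lc I)).indicator (fun _ => (1 : ℝ))) 2 volume :=
    memLp_indicator_const 2 (measurableSet_ival _) 1 (Or.inr (volume_ival_ne_top _))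
  exact ((h1.sub h2).const_mul ((Real.sqrt (len I))⁻¹))

/-- The Haar function `h_I` as an element of `L²(ℝ)`. -/
def haarLp (I : D) : Lp ℝ 2 (volume : Measure ℝ) := (memℒp_haar I).toLp (haar I)

/-- The random Haar multiplier `T_σ f = ∑_{I ∈ 𝒟} σ_I ⟨f, h_I⟩ h_I`, as an element of
`L²(ℝ)`; the (infinite) sum converges unconditionally in `L²`. -/
def Tfull (σ : D → ℝ) (g : ℝ → ℝ) : Lp ℝ 2 (volume : Measure ℝ) :=
  ∑' I : D, (σ I * ip g (haar I)) • haarLp I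

/-- The composition `M_b T_σ M_β` applied to `f`, as a function. -/
def MbTM (σ : D → ℝ) (b β f : ℝ → ℝ) : ℝ → ℝ := fun x =>
  b x * (Tfull σ fun y => β y * f y) x

/-!
Averaging over the signs removes the off-diagonal terms. Since
`⟨P^{σ,0,1}_β f, h_J⟩ = σ_J β_J ⟨f, h¹_J⟩`, the composition is `∑_J σ_J b_J β_J ⟨f, h¹_J⟩ h¹_J`, and
`𝔼 ‖·‖₂² = ∑_J (b_J β_J ⟨f, h¹_J⟩)²`. Testing with `f = h¹_J` gives the Carleson average over `J`,
so `c = 1` works. The upper bound, with `C = √8`, is the dyadic Carleson embedding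
`∑_I a_I² |I| ⟨f⟩_I² ≤ 8 K² ‖f‖₂²`. For `f ≥ 0` it follows from a finite layer-cake decomposition
over the values `t` taken by the averages. At each level, the intervals with `⟨f⟩_I ≥ t` are
packed into their disjoint maximal ones `J`, and each of these satisfies
`|J| ≤ (2 / t) ∫_J f 1_{2f > t}`. Summing over the layers leaves a pointwise bound by `8 f²`.
-/

lemma len_pos (I : D) : 0 < len I := zpow_pos two_pos _

lemma len_child (I : D) : (2 : ℝ) ^ (I.1 - 1) * 2 = len I := by
  rw [len, zpow_sub_one₀ two_ne_zero, inv_mul_cancel_right₀ two_ne_zero]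

lemma volume_ival (I : D) : volume (ival I) = ENNReal.ofReal (len I) := by
  rw [ival, Real.volume_Ico, len]; ring_nf

lemma volume_real_ival (I : D) : volume.real (ival I) = len I := by
  rw [measureReal_def, volume_ival, ENNReal.toReal_ofReal (len_pos I).le]

lemma ival_nonempty (I : D) : (ival I).Nonempty :=
  Set.nonempty_Ico.2 (by have := len_pos I; rw [len] at this; linarith)

lemma ival_lc (I : D) :
    ival (lc I) = Set.Ico ((I.2 : ℝ) * 2 ^ I.1) (I.2 * 2 ^ I.1 + 2 ^ (I.1 - 1)) := by
  have := len_child I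
  rw [len] at this
  simp only [ival, lc]
  congr 1 <;> push_cast <;> linear_combination (I.2 : ℝ) * this

lemma ival_rc (I : D) :
    ival (rc I) = Set.Ico ((I.2 : ℝ) * 2 ^ I.1 + 2 ^ (I.1 - 1)) ((I.2 + 1) * 2 ^ I.1) := by
  have := len_child I
  rw [len] at this
  simp only [ival, rc]
  push_cast
  congr 1
  · linear_combination (I.2 : ℝ) * this
  · linear_combination ((I.2 : ℝ) + 1) * this

lemma disjoint_ival_lc_rc (I : D) : Disjoint (ival (lc I)) (ival (rc I)) := by
  rw [ival_lc, ival_rc]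
  exact Set.Ico_disjoint_Ico_same

lemma ival_lc_union_rc (I : D) : ival (lc I) ∪ ival (rc I) = ival I := by
  have hpos : (0 : ℝ) < 2 ^ (I.1 - 1) := zpow_pos two_pos _
  have := len_child I
  rw [len] at this
  rw [ival_lc, ival_rc, ival, Set.Ico_union_Ico_eq_Ico] <;> linarith

lemma ival_lc_subset (I : D) : ival (lc I) ⊆ ival I :=
  ival_lc_union_rc I ▸ Set.subset_union_left

lemma ival_rc_subset (I : D) : ival (rc I) ⊆ ival I :=
  ival_lc_union_rc I ▸ Set.subset_union_right

def parent (I : D) : D := (I.1 + 1, I.2 / 2)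

lemma ival_subset_parent (I : D) : ival I ⊆ ival (parent I) := by
  obtain ⟨n, k⟩ := I
  have hpos : (0 : ℝ) < 2 ^ n := zpow_pos two_pos _
  have hlo : (2 : ℝ) * (k / 2 : ℤ) ≤ k := by exact_mod_cast Int.mul_ediv_self_le two_ne_zero
  have hhi : (k : ℝ) + 1 ≤ 2 * (k / 2 : ℤ) + 2 := by
    have : k + 1 ≤ 2 * (k / 2) + 2 := by omega
    exact_mod_cast this
  simp only [ival, parent, zpow_add_one₀ (two_ne_zero : (2 : ℝ) ≠ 0)]
  apply Set.Ico_subset_Ico <;> nlinarith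

lemma disjoint_ival_of_scale_eq {I J : D} (h : I.1 = J.1) (hk : I.2 ≠ J.2) :
    Disjoint (ival I) (ival J) := by
  have hpos : (0 : ℝ) < 2 ^ I.1 := zpow_pos two_pos _
  rw [ival, ival, ← h, Set.Ico_disjoint_Ico]
  rcases hk.lt_or_gt with hlt | hlt
  · have : (I.2 : ℝ) + 1 ≤ J.2 := by exact_mod_cast hlt
    exact min_le_left _ _ |>.trans (le_max_of_le_right (by nlinarith))
  · have : (J.2 : ℝ) + 1 ≤ I.2 := by exact_mod_cast hlt
    exact min_le_right _ _ |>.trans (le_max_of_le_left (by nlinarith))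

lemma subset_or_disjoint_of_scale_le {I J : D} (h : I.1 ≤ J.1) :
    ival I ⊆ ival J ∨ Disjoint (ival I) (ival J) := by
  obtain ⟨m, hm⟩ := Int.le.dest h
  induction m generalizing I with
  | zero =>
    by_cases hk : I.2 = J.2
    · exact .inl (Prod.ext (by omega) hk ▸ subset_rfl)
    · exact .inr (disjoint_ival_of_scale_eq (by omega) hk)
  | succ m ih =>
    have hp : (parent I).1 ≤ J.1 := by simp only [parent]; omega
    rcases ih hp (by simp only [parent]; omega) with hsub | hdis
    · exact .inl ((ival_subset_parent I).trans hsub)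
    · exact .inr (hdis.mono_left (ival_subset_parent I))

lemma subset_or_subset_or_disjoint (I J : D) :
    ival I ⊆ ival J ∨ ival J ⊆ ival I ∨ Disjoint (ival I) (ival J) := by
  rcases le_total I.1 J.1 with h | h
  · exact (subset_or_disjoint_of_scale_le h).imp_right Or.inr
  · exact (subset_or_disjoint_of_scale_le h).elim (fun h' => .inr (.inl h'))
      fun h' => .inr (.inr h'.symm)

lemma len_le_len_of_subset {I J : D} (h : ival I ⊆ ival J) : len I ≤ len J := by
  have := measure_mono (μ := volume) h
  rwa [volume_ival, volume_ival, ENNReal.ofReal_le_ofReal_iff (len_pos J).le] at this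

lemma scale_le_of_subset {I J : D} (h : ival I ⊆ ival J) : I.1 ≤ J.1 :=
  (zpow_le_zpow_iff_right₀ one_lt_two).1 (len_le_len_of_subset h)

lemma eq_of_subset_of_scale_eq {I J : D} (h : ival I ⊆ ival J) (hs : I.1 = J.1) : I = J := by
  by_contra hne
  have hk : I.2 ≠ J.2 := fun hk => hne (Prod.ext hs hk)
  obtain ⟨x, hx⟩ := ival_nonempty I
  exact (disjoint_ival_of_scale_eq hs hk).ne_of_mem hx (h hx) rfl

lemma scale_lt_of_subset_of_ne {I J : D} (h : ival I ⊆ ival J) (hne : I ≠ J) : I.1 < J.1 :=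
  (scale_le_of_subset h).lt_of_ne fun hs => hne (eq_of_subset_of_scale_eq h hs)

lemma subset_lc_or_subset_rc {I J : D} (h : ival I ⊆ ival J) (hne : I ≠ J) :
    ival I ⊆ ival (lc J) ∨ ival I ⊆ ival (rc J) := by
  have hs := scale_lt_of_subset_of_ne h hne
  obtain ⟨x, hx⟩ := ival_nonempty I
  have hxJ : x ∈ ival (lc J) ∪ ival (rc J) := (ival_lc_union_rc J).symm ▸ h hx
  rcases subset_or_disjoint_of_scale_le (I := I) (J := lc J) (by simp only [lc]; omega) with hl | hl
  · exact .inl hl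
  rcases subset_or_disjoint_of_scale_le (I := I) (J := rc J) (by simp only [rc]; omega) with hr | hr
  · exact .inr hr
  rcases hxJ with hxJ | hxJ
  · exact absurd rfl (hl.ne_of_mem hx hxJ)
  · exact absurd rfl (hr.ne_of_mem hx hxJ)

lemma haar1_of_mem {I : D} {x : ℝ} (hx : x ∈ ival I) : haar1 I x = (√(len I))⁻¹ := by
  simp [haar1, hx]

lemma haar1_of_notMem {I : D} {x : ℝ} (hx : x ∉ ival I) : haar1 I x = 0 := by
  simp [haar1, hx]

lemma haar1_nonneg (I : D) (x : ℝ) : 0 ≤ haar1 I x := by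
  by_cases hx : x ∈ ival I
  · rw [haar1_of_mem hx]; positivity
  · rw [haar1_of_notMem hx]

lemma haar_of_mem_lc {I : D} {x : ℝ} (hx : x ∈ ival (lc I)) : haar I x = -(√(len I))⁻¹ := by
  simp [haar, hx, Set.disjoint_left.1 (disjoint_ival_lc_rc I) hx]

lemma haar_of_mem_rc {I : D} {x : ℝ} (hx : x ∈ ival (rc I)) : haar I x = (√(len I))⁻¹ := by
  simp [haar, hx, Set.disjoint_right.1 (disjoint_ival_lc_rc I) hx]

lemma abs_haar (I : D) (x : ℝ) : |haar I x| = haar1 I x := by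
  by_cases hx : x ∈ ival I
  · rw [haar1_of_mem hx]
    rcases (ival_lc_union_rc I).symm ▸ hx with h | h
    · rw [haar_of_mem_lc h, abs_neg, abs_of_nonneg (by positivity)]
    · rw [haar_of_mem_rc h, abs_of_nonneg (by positivity)]
  · have hl : x ∉ ival (lc I) := fun h => hx (ival_lc_subset I h)
    have hr : x ∉ ival (rc I) := fun h => hx (ival_rc_subset I h)
    simp [haar, haar1, hx, hl, hr]

lemma haar_eq_zero_of_notMem {I : D} {x : ℝ} (hx : x ∉ ival I) : haar I x = 0 := by
  rw [← abs_eq_zero, abs_haar, haar1_of_notMem hx]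

lemma memLp_haar1 (I : D) : MemLp (haar1 I) 2 volume :=
  (memLp_indicator_const 2 (measurableSet_ival I) 1 (.inr (volume_ival_ne_top I))).const_mul _

lemma integrable_indicator_ival (I : D) (c : ℝ) :
    Integrable ((ival I).indicator fun _ => c) volume :=
  (integrable_indicator_iff (measurableSet_ival I)).2 (integrableOn_const (volume_ival_ne_top I))

lemma integral_haar (I : D) : ∫ x, haar I x = 0 := by
  simp only [haar]
  rw [integral_const_mul, integral_sub, integral_indicator_const _ (measurableSet_ival _),
    integral_indicator_const _ (measurableSet_ival _), volume_real_ival, volume_real_ival]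
  · simp [len, lc, rc]
  all_goals exact integrable_indicator_ival _ _

lemma ip_comm (f g : ℝ → ℝ) : ip f g = ip g f := by
  simp only [ip, mul_comm]

lemma ip_haar1 (f : ℝ → ℝ) (I : D) : ip f (haar1 I) = (√(len I))⁻¹ * ∫ x in ival I, f x := by
  rw [ip, ← integral_const_mul, ← integral_indicator (measurableSet_ival I)]
  congr 1 with x
  by_cases hx : x ∈ ival I <;> simp [haar1, hx, mul_comm]

lemma ip_haar1_haar1_of_subset {I J : D} (h : ival I ⊆ ival J) :
    ip (haar1 I) (haar1 J) = √(len I) / √(len J) := by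
  have hI : ∫ x in ival J, haar1 I x = √(len I) := by
    simp only [haar1]
    rw [integral_const_mul, setIntegral_indicator (measurableSet_ival I),
      Set.inter_eq_right.2 h, setIntegral_const, volume_real_ival, smul_eq_mul, mul_one,
      inv_mul_eq_div, Real.div_sqrt]
  rw [ip_haar1, hI, inv_mul_eq_div]

lemma ip_haar1_self (I : D) : ip (haar1 I) (haar1 I) = 1 := by
  rw [ip_haar1_haar1_of_subset subset_rfl, div_self (Real.sqrt_pos.2 (len_pos I)).ne']

lemma ip_haar_self (I : D) : ip (haar I) (haar I) = 1 := by
  rw [← ip_haar1_self I, ip, ip]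
  congr 1 with x
  rw [← abs_haar, abs_mul_abs_self]

lemma ip_haar_of_ssubset {I J : D} (h : ival I ⊆ ival J) (hne : I ≠ J) :
    ip (haar I) (haar J) = 0 := by
  obtain ⟨c, hc⟩ : ∃ c, ∀ x ∈ ival I, haar J x = c := by
    rcases subset_lc_or_subset_rc h hne with h' | h'
    · exact ⟨_, fun x hx => haar_of_mem_lc (h' hx)⟩
    · exact ⟨_, fun x hx => haar_of_mem_rc (h' hx)⟩
  have : (fun x => haar I x * haar J x) = fun x => c * haar I x := by
    ext x
    by_cases hx : x ∈ ival I
    · rw [hc x hx, mul_comm]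
    · simp [haar_eq_zero_of_notMem hx]
  rw [ip, this, integral_const_mul, integral_haar, mul_zero]

lemma ip_haar_of_disjoint {I J : D} (h : Disjoint (ival I) (ival J)) :
    ip (haar I) (haar J) = 0 := by
  have : (fun x => haar I x * haar J x) = 0 := by
    ext x
    by_cases hx : x ∈ ival I
    · simp [haar_eq_zero_of_notMem (Set.disjoint_left.1 h hx)]
    · simp [haar_eq_zero_of_notMem hx]
  rw [ip, this, Pi.zero_def, integral_zero]

lemma ip_haar_haar (I J : D) : ip (haar I) (haar J) = if I = J then 1 else 0 := by
  split_ifs with hIJ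
  · exact hIJ ▸ ip_haar_self I
  rcases subset_or_subset_or_disjoint I J with h | h | h
  · exact ip_haar_of_ssubset h hIJ
  · rw [ip_comm]; exact ip_haar_of_ssubset h (Ne.symm hIJ)
  · exact ip_haar_of_disjoint h



namespace IsSignMeasure

variable {μ : Measure (D → ℝ)}

lemma ae_eq_one_or_eq_neg_one (hμ : IsSignMeasure μ) (I : D) :
    ∀ᵐ σ ∂μ, σ I = 1 ∨ σ I = -1 := by
  have h : ∀ᵐ x ∂(μ.map fun σ => σ I), x = 1 ∨ x = -1 := by
    rw [hμ.2.2 I]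
    simp [ae_add_measure_iff]
  exact ae_of_ae_map (measurable_pi_apply I).aemeasurable h

lemma integral_eval (hμ : IsSignMeasure μ) (I : D) : ∫ σ, σ I ∂μ = 0 := by
  have hmap := integral_map (μ := μ) (measurable_pi_apply I).aemeasurable
    (f := fun x : ℝ => x) aestronglyMeasurable_id
  rw [← hmap, hμ.2.2 I, integral_smul_measure,
    integral_add_measure (integrable_dirac (by simp)) (integrable_dirac (by simp))]
  simp

lemma integrable_eval_mul_eval (hμ : IsSignMeasure μ) (I J : D) :
    Integrable (fun σ : D → ℝ => σ I * σ J) μ := by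
  have := hμ.1
  refine (integrable_const 1).mono'
    ((measurable_pi_apply I).mul (measurable_pi_apply J)).aestronglyMeasurable ?_
  filter_upwards [hμ.ae_eq_one_or_eq_neg_one I, hμ.ae_eq_one_or_eq_neg_one J] with σ hI hJ
  rcases hI with hI | hI <;> rcases hJ with hJ | hJ <;> simp [hI, hJ]

lemma integral_eval_mul_eval (hμ : IsSignMeasure μ) (I J : D) :
    ∫ σ, σ I * σ J ∂μ = if I = J then 1 else 0 := by
  have := hμ.1
  split_ifs with hIJ
  · subst hIJ
    rw [integral_congr_ae (g := fun _ => 1), integral_const, probReal_univ, smul_eq_mul, mul_one]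
    filter_upwards [hμ.ae_eq_one_or_eq_neg_one I] with σ hσ
    rcases hσ with hσ | hσ <;> simp [hσ]
  · rw [(hμ.2.1.indepFun hIJ).integral_fun_mul_eq_mul_integral
      (measurable_pi_apply I).aestronglyMeasurable (measurable_pi_apply J).aestronglyMeasurable,
      hμ.integral_eval I, zero_mul]

lemma integral_sum_sum (hμ : IsSignMeasure μ) (s : Finset D) (G : D → D → ℝ) :
    ∫ σ, ∑ I ∈ s, ∑ J ∈ s, σ I * σ J * G I J ∂μ = ∑ I ∈ s, G I I := by
  rw [integral_finsetSum _ fun I _ => integrable_finsetSum _ fun J _ =>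
    (hμ.integrable_eval_mul_eval I J).mul_const _]
  refine Finset.sum_congr rfl fun I hI => ?_
  rw [integral_finsetSum _ fun J _ => (hμ.integrable_eval_mul_eval I J).mul_const _]
  simp_rw [integral_mul_const, hμ.integral_eval_mul_eval, ite_mul, one_mul, zero_mul]
  rw [Finset.sum_ite_eq s I, if_pos hI]

end IsSignMeasure

lemma ip_finsetSum_left {ι : Type*} (s : Finset ι) (c : ι → ℝ) (g : ι → ℝ → ℝ) (h : ℝ → ℝ)
    (hg : ∀ i ∈ s, Integrable (fun x => g i x * h x) volume) :
    ip (fun x => ∑ i ∈ s, c i * g i x) h = ∑ i ∈ s, c i * ip (g i) h := by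
  simp only [ip, Finset.sum_mul, mul_assoc]
  rw [integral_finsetSum _ fun i hi => (hg i hi).const_mul (c i)]
  simp only [integral_const_mul]

lemma l2normSq_finsetSum {ι : Type*} (s : Finset ι) (c : ι → ℝ) (g : ι → ℝ → ℝ)
    (hg : ∀ i, MemLp (g i) 2 volume) :
    l2normSq (fun x => ∑ i ∈ s, c i * g i x) = ∑ i ∈ s, ∑ j ∈ s, c i * c j * ip (g i) (g j) := by
  have hint : ∀ i j, Integrable (fun x => g i x * g j x) volume :=
    fun i j => (hg i).integrable_mul (hg j)
  simp only [l2normSq, sq]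
  rw [← ip, ip_finsetSum_left s c g _ fun i _ => ?_]
  · refine Finset.sum_congr rfl fun i _ => ?_
    rw [ip_comm, ip_finsetSum_left s c g _ fun j _ => hint j i, Finset.mul_sum]
    exact Finset.sum_congr rfl fun j _ => by rw [ip_comm]; ring
  · simp only [Finset.mul_sum]
    exact integrable_finsetSum _ fun j _ => ((hint i j).const_mul (c j)).congr
      (.of_forall fun x => by ring)

lemma ip_psig_haar (σ : D → ℝ) (β : D →₀ ℝ) (f : ℝ → ℝ) (J : D) :
    ip (Psig σ false true β f) (haar J) = σ J * β J * ip f (haar1 J) := by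
  have hP : Psig σ false true β f =
      fun x => ∑ I ∈ β.support, σ I * β I * ip f (haar1 I) * haar I x := by
    ext x
    exact Finset.sum_congr rfl fun I _ => by simp only [hfun]; ring
  rw [hP, ip_finsetSum_left _ _ _ _ fun I _ => (memℒp_haar I).integrable_mul (memℒp_haar J)]
  simp only [ip_haar_haar, mul_ite, mul_one, mul_zero, Finset.sum_ite_eq']
  split_ifs with hJ
  · rfl
  · rw [Finsupp.notMem_support_iff.1 hJ]; ring

lemma paraproduct_comp_eq (σ : D → ℝ) (b β : D →₀ ℝ) (f : ℝ → ℝ) :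
    P true false b (Psig σ false true β f) =
      fun x => ∑ J ∈ b.support, σ J * (b J * β J * ip f (haar1 J)) * haar1 J x := by
  ext x
  refine Finset.sum_congr rfl fun J _ => ?_
  simp only [hfun, ip_psig_haar]
  ring

lemma integral_l2normSq_paraproduct_comp {μ : Measure (D → ℝ)} (hμ : IsSignMeasure μ)
    (b β : D →₀ ℝ) (f : ℝ → ℝ) :
    ∫ σ, l2normSq (P true false b (Psig σ false true β f)) ∂μ =
      ∑ I ∈ b.support ∩ β.support, (b I * β I * ip f (haar1 I)) ^ 2 := by
  simp_rw [paraproduct_comp_eq, l2normSq_finsetSum _ _ _ memLp_haar1]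
  have := hμ.integral_sum_sum b.support fun I J =>
    (b I * β I * ip f (haar1 I)) * (b J * β J * ip f (haar1 J)) * ip (haar1 I) (haar1 J)
  simp only [ip_haar1_self, mul_one, ← sq] at this
  convert this using 1
  · congr 1 with σ
    exact Finset.sum_congr rfl fun I _ => Finset.sum_congr rfl fun J _ => by ring
  · refine Finset.sum_subset Finset.inter_subset_left fun I hIb hI => ?_
    rw [Finsupp.notMem_support_iff.1 fun h => hI (Finset.mem_inter.2 ⟨hIb, h⟩)]
    ring

section Layers

def predIn (V : Finset ℝ) (y : ℝ) : ℝ :=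
  if h : (V.filter (· < y)).Nonempty then (V.filter (· < y)).max' h else 0

variable {V : Finset ℝ}

lemma predIn_le {y : ℝ} (hy : 0 ≤ y) : predIn V y ≤ y := by
  unfold predIn
  split_ifs with h
  · exact ((Finset.mem_filter.1 (Finset.max'_mem _ h)).2).le
  · exact hy

lemma predIn_nonneg (hV : ∀ μ ∈ V, 0 ≤ μ) (y : ℝ) : 0 ≤ predIn V y := by
  unfold predIn
  split_ifs with h
  · exact hV _ (Finset.mem_filter.1 (Finset.max'_mem _ h)).1
  · exact le_rfl

lemma filter_le_eq_insert_filter_lt {y : ℝ} (hy : y ∈ V) :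
    V.filter (· ≤ y) = insert y (V.filter (· < y)) := by
  ext ν
  simp only [Finset.mem_filter, Finset.mem_insert, le_iff_eq_or_lt]
  constructor
  · rintro ⟨hν, rfl | h⟩ <;> simp_all
  · rintro (rfl | ⟨hν, h⟩) <;> simp_all

lemma sum_filter_lt_sub_predIn (φ : ℝ → ℝ) (hφ : φ 0 = 0) (V : Finset ℝ) (y : ℝ) :
    ∑ μ ∈ V.filter (· < y), (φ μ - φ (predIn V μ)) = φ (predIn V y) := by
  induction hn : (V.filter (· < y)).card using Nat.strong_induction_on generalizing y with
  | _ n ih =>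
  by_cases h : (V.filter (· < y)).Nonempty
  · set m := (V.filter (· < y)).max' h
    have hm := Finset.mem_filter.1 (Finset.max'_mem _ h)
    have hsplit : V.filter (· < y) = insert m (V.filter (· < m)) := by
      rw [← filter_le_eq_insert_filter_lt hm.1]
      ext ν
      simp only [Finset.mem_filter]
      exact ⟨fun hν => ⟨hν.1, Finset.le_max' _ _ (Finset.mem_filter.2 hν)⟩,
        fun hν => ⟨hν.1, hν.2.trans_lt hm.2⟩⟩
    have hm' : m ∉ V.filter (· < m) := by simp
    have hcard : (V.filter (· < m)).card < n := by
      rw [← hn, hsplit, Finset.card_insert_of_notMem hm']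
      exact Nat.lt_succ_self _
    have hpred : predIn V y = m := dif_pos h
    rw [hsplit, Finset.sum_insert hm', ih _ hcard m rfl, hpred]
    ring
  · rw [Finset.not_nonempty_iff_eq_empty.1 h, Finset.sum_empty, predIn, dif_neg h, hφ]

lemma sq_eq_sum_layers (hV : ∀ μ ∈ V, 0 < μ) {x : ℝ} (hx : 0 ≤ x) (hxV : 0 < x → x ∈ V) :
    x ^ 2 = ∑ μ ∈ V.filter (· ≤ x), (μ ^ 2 - predIn V μ ^ 2) := by
  rcases hx.eq_or_lt with rfl | hx
  · rw [Finset.filter_false_of_mem fun μ hμ => not_le.2 (hV μ hμ), Finset.sum_empty]; ring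
  have hxV := hxV hx
  rw [filter_le_eq_insert_filter_lt hxV, Finset.sum_insert (by simp),
    sum_filter_lt_sub_predIn (· ^ 2) (by ring)]
  ring

lemma sum_layers_div_le (hV : ∀ μ ∈ V, 0 < μ) {y : ℝ} (hy : 0 ≤ y) :
    ∑ μ ∈ V.filter (· < y), 2 * (μ ^ 2 - predIn V μ ^ 2) / μ ≤ 4 * y := by
  calc ∑ μ ∈ V.filter (· < y), 2 * (μ ^ 2 - predIn V μ ^ 2) / μ
      ≤ ∑ μ ∈ V.filter (· < y), 4 * (μ - predIn V μ) := by
        refine Finset.sum_le_sum fun μ hμ => ?_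
        have hμ := hV μ (Finset.mem_filter.1 hμ).1
        have hp := predIn_le (V := V) hμ.le
        have hp0 := predIn_nonneg (fun ν hν => (hV ν hν).le) μ
        rw [div_le_iff₀ hμ]
        nlinarith
    _ = 4 * predIn V y := by
        rw [← Finset.mul_sum]
        exact congrArg _ (sum_filter_lt_sub_predIn id rfl V y)
    _ ≤ 4 * y := by linarith [predIn_le (V := V) hy]

lemma sum_layers_div_mul_ite_le (hV : ∀ μ ∈ V, 0 < μ) {z : ℝ} (hz : 0 ≤ z) :
    ∑ μ ∈ V, 2 * (μ ^ 2 - predIn V μ ^ 2) / μ * (if μ < 2 * z then z else 0) ≤ 8 * z ^ 2 := by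
  simp only [mul_ite, mul_zero]
  rw [← Finset.sum_filter, ← Finset.sum_mul]
  nlinarith [sum_layers_div_le hV (by positivity : 0 ≤ 2 * z)]

lemma sum_mul_sq_eq_sum_layers {ι : Type*} (t : Finset ι) (c A : ι → ℝ) (hA : ∀ i, 0 ≤ A i)
    (hV : ∀ μ ∈ V, 0 < μ) (hAV : ∀ i ∈ t, 0 < A i → A i ∈ V) :
    ∑ i ∈ t, c i * A i ^ 2 =
      ∑ μ ∈ V, (μ ^ 2 - predIn V μ ^ 2) * ∑ i ∈ t.filter (fun i => μ ≤ A i), c i := by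
  calc ∑ i ∈ t, c i * A i ^ 2
      = ∑ i ∈ t, ∑ μ ∈ V, if μ ≤ A i then (μ ^ 2 - predIn V μ ^ 2) * c i else 0 := by
        refine Finset.sum_congr rfl fun i hi => ?_
        rw [← Finset.sum_filter, ← Finset.sum_mul, ← sq_eq_sum_layers hV (hA i) (hAV i hi),
          mul_comm]
    _ = _ := by
        rw [Finset.sum_comm]
        simp only [Finset.mul_sum, Finset.sum_filter, mul_ite, mul_zero]

end Layers

lemma sum_le_sum_sum_of_forall_exists {ι κ : Type*} (c : ι → ℝ) (hc : ∀ i, 0 ≤ c i)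
    (u : Finset ι) (M : Finset κ) (r : ι → κ → Prop) [∀ i j, Decidable (r i j)]
    (h : ∀ i ∈ u, ∃ j ∈ M, r i j) :
    ∑ i ∈ u, c i ≤ ∑ j ∈ M, ∑ i ∈ u.filter (r · j), c i := by
  simp only [Finset.sum_filter]
  rw [Finset.sum_comm]
  refine Finset.sum_le_sum fun i hi => ?_
  obtain ⟨j, hj, hij⟩ := h i hi
  calc c i = if r i j then c i else 0 := (if_pos hij).symm
    _ ≤ _ := Finset.single_le_sum (f := fun j => if r i j then c i else 0)
        (fun j _ => by split_ifs <;> simp [hc]) hj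

lemma measureReal_le_two_div_mul_setIntegral_indicator {α : Type*} [MeasurableSpace α]
    {ν : Measure α} {S : Set α} (hSfin : ν S ≠ ⊤) {f : α → ℝ}
    (hfm : Measurable f) (hf : IntegrableOn f S ν) {t : ℝ} (ht : 0 < t)
    (h : t * ν.real S ≤ ∫ x in S, f x ∂ν) :
    ν.real S ≤ 2 / t * ∫ x in S, {x | t < 2 * f x}.indicator f x ∂ν := by
  set E := {x | t < 2 * f x}
  have hE : MeasurableSet E := measurableSet_lt measurable_const (hfm.const_mul 2)
  have hsplit : ∫ x in S, f x ∂ν =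
      (∫ x in S, E.indicator f x ∂ν) + ∫ x in S, Eᶜ.indicator f x ∂ν := by
    rw [← integral_add (hf.indicator hE) (hf.indicator hE.compl)]
    simp_rw [Set.indicator_self_add_compl_apply]
  have hlow : ∫ x in S, Eᶜ.indicator f x ∂ν ≤ t / 2 * ν.real S := by
    calc ∫ x in S, Eᶜ.indicator f x ∂ν ≤ ∫ _ in S, t / 2 ∂ν := by
          refine setIntegral_mono (hf.indicator hE.compl) (integrableOn_const hSfin) fun x => ?_
          by_cases hx : x ∈ E
          · rw [Set.indicator_of_notMem (by simpa using hx)]; positivity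
          · rw [Set.indicator_of_mem hx]; simp only [E, Set.mem_ofPred_eq, not_lt] at hx; linarith
      _ = t / 2 * ν.real S := by rw [setIntegral_const, smul_eq_mul, mul_comm]
  rw [div_mul_eq_mul_div, le_div_iff₀ ht]
  linarith

lemma integrable_indicator_lt_two_mul {α : Type*} [MeasurableSpace α] {ν : Measure α}
    {f : α → ℝ} (hfm : Measurable f) (hf0 : ∀ x, 0 ≤ f x) (hf : Integrable (fun x => f x ^ 2) ν)
    {t : ℝ} (ht : 0 < t) : Integrable ({x | t < 2 * f x}.indicator f) ν := by
  -- on `{t < 2 f}` one has `f ≤ (2 / t) f²`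
  refine (hf.const_mul (2 / t)).mono'
    (hfm.indicator (measurableSet_lt measurable_const (hfm.const_mul 2))).aestronglyMeasurable
    (.of_forall fun x => ?_)
  by_cases hx : t < 2 * f x
  · rw [Set.indicator_of_mem (show x ∈ {x | t < 2 * f x} from hx), Real.norm_of_nonneg (hf0 x), div_mul_eq_mul_div,
      le_div_iff₀ ht]
    nlinarith [hf0 x]
  · rw [Set.indicator_of_notMem (show x ∉ {x | t < 2 * f x} from hx), norm_zero]
    positivity

section Maximal

def maximals (u : Finset D) : Finset D :=
  u.filter fun J => ∀ J' ∈ u, ival J ⊆ ival J' → J = J'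

lemma maximals_subset (u : Finset D) : maximals u ⊆ u := Finset.filter_subset _ _

lemma exists_mem_maximals_subset {u : Finset D} {I : D} (hI : I ∈ u) :
    ∃ J ∈ maximals u, ival I ⊆ ival J := by
  obtain ⟨J, hJ, hmax⟩ := Finset.exists_max_image (u.filter fun J => ival I ⊆ ival J)
    (fun J => J.1) ⟨I, Finset.mem_filter.2 ⟨hI, subset_rfl⟩⟩
  obtain ⟨hJu, hIJ⟩ := Finset.mem_filter.1 hJ
  refine ⟨J, Finset.mem_filter.2 ⟨hJu, fun J' hJ' hsub => ?_⟩, hIJ⟩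
  exact eq_of_subset_of_scale_eq hsub <| (scale_le_of_subset hsub).antisymm <|
    hmax J' (Finset.mem_filter.2 ⟨hJ', hIJ.trans hsub⟩)

lemma pairwise_disjoint_maximals (u : Finset D) :
    (maximals u : Set D).Pairwise (Function.onFun Disjoint ival) := by
  intro J hJ J' hJ' hne
  have hmax := (Finset.mem_filter.1 hJ).2
  have hmax' := (Finset.mem_filter.1 hJ').2
  rcases subset_or_subset_or_disjoint J J' with h | h | h
  · exact absurd (hmax J' (maximals_subset u hJ') h) hne
  · exact absurd (hmax' J (maximals_subset u hJ) h).symm hne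
  · exact h

lemma sum_le_mul_sum_len_maximals {s u : Finset D} (hus : u ⊆ s) {c : D → ℝ}
    (hc : ∀ I, 0 ≤ c I) {C : ℝ} (hC : ∀ J, ∑ I ∈ s.filter (fun I => ival I ⊆ ival J), c I ≤ C * len J) :
    ∑ I ∈ u, c I ≤ C * ∑ J ∈ maximals u, len J := by
  calc ∑ I ∈ u, c I ≤ ∑ J ∈ maximals u, ∑ I ∈ u.filter (fun I => ival I ⊆ ival J), c I :=
        sum_le_sum_sum_of_forall_exists c hc u _ _ fun I hI => exists_mem_maximals_subset hI
    _ ≤ ∑ J ∈ maximals u, C * len J := Finset.sum_le_sum fun J _ =>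
        (Finset.sum_le_sum_of_subset_of_nonneg (Finset.filter_subset_filter _ hus)
          fun I _ _ => hc I).trans (hC J)
    _ = C * ∑ J ∈ maximals u, len J := by rw [Finset.mul_sum]

end Maximal

lemma sq_ip_haar1 (f : ℝ → ℝ) (I : D) :
    ip f (haar1 I) ^ 2 = len I * (⨍ x in ival I, f x) ^ 2 := by
  have := len_pos I
  rw [ip_haar1, setAverage_eq, volume_real_ival, smul_eq_mul, mul_pow, mul_pow, inv_pow,
    inv_pow, Real.sq_sqrt this.le]
  field_simp

lemma integrableOn_ival_of_memLp {f : ℝ → ℝ} (hf : MemLp f 2 volume) (I : D) :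
    IntegrableOn f (ival I) volume :=
  have := isFiniteMeasure_restrict.2 (volume_ival_ne_top I)
  (hf.restrict _).integrable one_le_two

lemma carleson_level_estimate {s : Finset D} {c : D → ℝ} (hc : ∀ I, 0 ≤ c I) {C : ℝ}
    (hC0 : 0 ≤ C) (hC : ∀ J, ∑ I ∈ s.filter (fun I => ival I ⊆ ival J), c I ≤ C * len J)
    {f : ℝ → ℝ} (hfm : Measurable f) (hf0 : ∀ x, 0 ≤ f x) (hf : MemLp f 2 volume)
    {t : ℝ} (ht : 0 < t) :
    ∑ I ∈ s.filter (fun I => t ≤ ⨍ x in ival I, f x), c I ≤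
      C * (2 / t * ∫ x, {x | t < 2 * f x}.indicator f x) := by
  set u := s.filter fun I => t ≤ ⨍ x in ival I, f x
  set g := {x | t < 2 * f x}.indicator f
  have hg : Integrable g volume := integrable_indicator_lt_two_mul hfm hf0 hf.integrable_sq ht
  have hweak : ∀ J ∈ maximals u, len J ≤ 2 / t * ∫ x in ival J, g x := by
    intro J hJ
    have hJ := (Finset.mem_filter.1 (maximals_subset u hJ)).2
    rw [setAverage_eq, volume_real_ival, smul_eq_mul, le_inv_mul_iff₀ (len_pos J)] at hJ
    rw [← volume_real_ival]
    exact measureReal_le_two_div_mul_setIntegral_indicator (volume_ival_ne_top J) hfm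
      (integrableOn_ival_of_memLp hf J) ht (by rwa [volume_real_ival, mul_comm])
  calc ∑ I ∈ u, c I ≤ C * ∑ J ∈ maximals u, len J :=
        sum_le_mul_sum_len_maximals (Finset.filter_subset _ _) hc hC
    _ ≤ C * ∑ J ∈ maximals u, 2 / t * ∫ x in ival J, g x := by gcongr with J hJ; exact hweak J hJ
    _ = C * (2 / t * ∫ x in ⋃ J ∈ maximals u, ival J, g x) := by
        rw [integral_biUnion_finset _ (fun J _ => measurableSet_ival J)
          (pairwise_disjoint_maximals u) fun J _ => hg.integrableOn]
        simp only [Finset.mul_sum]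
    _ ≤ C * (2 / t * ∫ x, g x) := by
        refine mul_le_mul_of_nonneg_left (mul_le_mul_of_nonneg_left ?_ (by positivity)) hC0
        exact setIntegral_le_integral hg
          (.of_forall fun x => Set.indicator_nonneg (fun y _ => hf0 y) x)

theorem carleson_embedding_of_nonneg {s : Finset D} {a : D → ℝ} {K : ℝ}
    (hK : ∀ J, ∑ I ∈ s.filter (fun I => ival I ⊆ ival J), a I ^ 2 * len I ≤ K ^ 2 * len J)
    {f : ℝ → ℝ} (hfm : Measurable f) (hf0 : ∀ x, 0 ≤ f x) (hf : MemLp f 2 volume) :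
    ∑ I ∈ s, (a I * ip f (haar1 I)) ^ 2 ≤ 8 * K ^ 2 * ∫ x, f x ^ 2 := by
  set A : D → ℝ := fun I => ⨍ x in ival I, f x
  set V := (s.image A).filter (0 < ·)
  have hV : ∀ μ ∈ V, 0 < μ := fun μ hμ => (Finset.mem_filter.1 hμ).2
  have hΔ : ∀ μ ∈ V, 0 ≤ μ ^ 2 - predIn V μ ^ 2 := fun μ hμ => by
    nlinarith [predIn_le (V := V) (hV μ hμ).le, predIn_nonneg (fun ν hν => (hV ν hν).le) μ]
  have hA : ∀ I, 0 ≤ A I := fun I => by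
    simp only [A, setAverage_eq, smul_eq_mul]
    exact mul_nonneg (by positivity) (setIntegral_nonneg (measurableSet_ival I) fun x _ => hf0 x)
  set E : ℝ → ℝ → ℝ := fun t => {x | t < 2 * f x}.indicator f
  have hE : ∀ μ ∈ V, Integrable (E μ) volume := fun μ hμ =>
    integrable_indicator_lt_two_mul hfm hf0 hf.integrable_sq (hV μ hμ)
  calc ∑ I ∈ s, (a I * ip f (haar1 I)) ^ 2
      = ∑ I ∈ s, a I ^ 2 * len I * A I ^ 2 := by simp_rw [mul_pow, sq_ip_haar1, A, mul_assoc]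
    _ = ∑ μ ∈ V, (μ ^ 2 - predIn V μ ^ 2) *
          ∑ I ∈ s.filter (fun I => μ ≤ A I), a I ^ 2 * len I :=
        sum_mul_sq_eq_sum_layers s _ A hA hV fun I hI hAI =>
          Finset.mem_filter.2 ⟨Finset.mem_image_of_mem A hI, hAI⟩
    _ ≤ ∑ μ ∈ V, (μ ^ 2 - predIn V μ ^ 2) * (K ^ 2 * (2 / μ * ∫ x, E μ x)) := by
        gcongr with μ hμ
        · exact hΔ μ hμ
        · exact carleson_level_estimate (fun I => mul_nonneg (sq_nonneg _) (len_pos I).le)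
            (sq_nonneg K) hK hfm hf0 hf (hV μ hμ)
    _ = K ^ 2 * ∫ x, ∑ μ ∈ V, 2 * (μ ^ 2 - predIn V μ ^ 2) / μ * E μ x := by
        rw [integral_finsetSum _ fun μ hμ => (hE μ hμ).const_mul _, Finset.mul_sum]
        refine Finset.sum_congr rfl fun μ _ => ?_
        rw [integral_const_mul]
        ring
    _ ≤ K ^ 2 * ∫ x, 8 * f x ^ 2 := by
        refine mul_le_mul_of_nonneg_left ?_ (sq_nonneg K)
        refine integral_mono (integrable_finsetSum _ fun μ hμ => (hE μ hμ).const_mul _)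
          (hf.integrable_sq.const_mul 8) fun x => ?_
        simpa only [E, Set.indicator_apply, Set.mem_ofPred_eq] using
          sum_layers_div_mul_ite_le hV (hf0 x)
    _ = 8 * K ^ 2 * ∫ x, f x ^ 2 := by rw [integral_const_mul]; ring

theorem carleson_embedding {s : Finset D} {a : D → ℝ} {K : ℝ}
    (hK : ∀ J, ∑ I ∈ s.filter (fun I => ival I ⊆ ival J), a I ^ 2 * len I ≤ K ^ 2 * len J)
    {f : ℝ → ℝ} (hf : MemLp f 2 volume) :
    ∑ I ∈ s, (a I * ip f (haar1 I)) ^ 2 ≤ 8 * K ^ 2 * ∫ x, f x ^ 2 := by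
  set g : ℝ → ℝ := fun x => |hf.1.mk f x|
  have hfg : ∀ᵐ x, |f x| = g x := hf.1.ae_eq_mk.mono fun x hx => by rw [hx]
  have hg : MemLp g 2 volume := hf.norm.ae_eq hfg
  have hip : ∀ I, |ip f (haar1 I)| ≤ ip g (haar1 I) := fun I =>
    calc |ip f (haar1 I)| ≤ ∫ x, |f x * haar1 I x| := abs_integral_le_integral_abs
      _ = ip g (haar1 I) := integral_congr_ae <| hfg.mono fun x hx => by
        simp only [abs_mul, abs_of_nonneg (haar1_nonneg I x), hx]
  calc ∑ I ∈ s, (a I * ip f (haar1 I)) ^ 2 ≤ ∑ I ∈ s, (a I * ip g (haar1 I)) ^ 2 := by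
        refine Finset.sum_le_sum fun I _ => ?_
        rw [mul_pow, mul_pow, ← sq_abs (ip f _)]
        gcongr
        exact hip I
    _ ≤ 8 * K ^ 2 * ∫ x, g x ^ 2 :=
        carleson_embedding_of_nonneg hK hf.1.measurable_mk.abs (fun x => abs_nonneg _) hg
    _ = 8 * K ^ 2 * ∫ x, f x ^ 2 := by
        congr 1
        exact integral_congr_ae <| hfg.mono fun x hx => by simp only [← hx, sq_abs]

section CarlesonNorm

variable (s : Finset D) (a : D → ℝ)

lemma bddAbove_carleson_avg : BddAbove (Set.range fun J : D =>
    √((len J)⁻¹ * ∑ I ∈ s.filter (fun I => ival I ⊆ ival J), a I ^ 2 * len I)) := by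
  refine ⟨√(∑ I ∈ s, a I ^ 2), Set.forall_mem_range.2 fun J => Real.sqrt_le_sqrt ?_⟩
  rw [Finset.mul_sum]
  refine (Finset.sum_le_sum fun I hI => ?_).trans
    (Finset.sum_le_sum_of_subset_of_nonneg (Finset.filter_subset _ _) fun I _ _ => sq_nonneg _)
  rw [mul_left_comm]
  refine mul_le_of_le_one_right (sq_nonneg _) ?_
  rw [inv_mul_le_one₀ (len_pos J)]
  exact len_le_len_of_subset (Finset.mem_filter.1 hI).2

lemma le_carlOn (J : D) :
    √((len J)⁻¹ * ∑ I ∈ s.filter (fun I => ival I ⊆ ival J), a I ^ 2 * len I) ≤ carlOn s a :=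
  le_ciSup (bddAbove_carleson_avg s a) J

lemma carlOn_nonneg : 0 ≤ carlOn s a := (Real.sqrt_nonneg _).trans (le_carlOn s a 0)

lemma sum_filter_subset_le_carlOn_sq (J : D) :
    ∑ I ∈ s.filter (fun I => ival I ⊆ ival J), a I ^ 2 * len I ≤ carlOn s a ^ 2 * len J := by
  rw [mul_comm, ← inv_mul_le_iff₀ (len_pos J)]
  have h0 : 0 ≤ (len J)⁻¹ * ∑ I ∈ s.filter (fun I => ival I ⊆ ival J), a I ^ 2 * len I :=
    mul_nonneg (inv_nonneg.2 (len_pos J).le)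
      (Finset.sum_nonneg fun I _ => mul_nonneg (sq_nonneg _) (len_pos I).le)
  rw [← Real.sq_sqrt h0]
  exact pow_le_pow_left₀ (Real.sqrt_nonneg _) (le_carlOn s a J) 2

end CarlesonNorm

lemma integral_sq_eq_toReal_eLpNorm_sq {α : Type*} [MeasurableSpace α] {ν : Measure α}
    {f : α → ℝ} (hf : MemLp f 2 ν) : ∫ x, f x ^ 2 ∂ν = (eLpNorm f 2 ν).toReal ^ 2 := by
  have h := hf.eLpNorm_eq_integral_rpow_norm two_ne_zero ENNReal.ofNat_ne_top
  simp only [ENNReal.toReal_ofNat, Real.norm_eq_abs, Real.rpow_two, sq_abs] at h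
  rw [h, ENNReal.toReal_ofReal (by positivity), ← Real.rpow_natCast, ← Real.rpow_mul
    (integral_nonneg fun x => sq_nonneg _)]
  norm_num

lemma UnitL2.integral_sq {f : ℝ → ℝ} (hf : UnitL2 f) : ∫ x, f x ^ 2 = 1 := by
  rw [integral_sq_eq_toReal_eLpNorm_sq hf.1, hf.2, ENNReal.toReal_one, one_pow]

lemma unitL2_haar1 (I : D) : UnitL2 (haar1 I) := by
  refine ⟨memLp_haar1 I, ?_⟩
  have h := integral_sq_eq_toReal_eLpNorm_sq (memLp_haar1 I)
  simp_rw [sq] at h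
  rw [← ip, ip_haar1_self] at h
  rw [← ENNReal.toReal_eq_one_iff]
  nlinarith [ENNReal.toReal_nonneg (a := eLpNorm (haar1 I) 2 volume)]

instance : Nonempty {f : ℝ → ℝ // UnitL2 f} := ⟨⟨haar1 0, unitL2_haar1 0⟩⟩

section AvgOpNorm

variable {μ : Measure (D → ℝ)} {T : (D → ℝ) → (ℝ → ℝ) → ℝ → ℝ} {C : ℝ}

lemma avgOpNorm_le (h : ∀ f, UnitL2 f → √(∫ σ, l2normSq (T σ f) ∂μ) ≤ C) :
    avgOpNorm μ T ≤ C :=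
  ciSup_le fun f => h f.1 f.2

lemma le_avgOpNorm (h : ∀ f, UnitL2 f → √(∫ σ, l2normSq (T σ f) ∂μ) ≤ C) {f : ℝ → ℝ}
    (hf : UnitL2 f) : √(∫ σ, l2normSq (T σ f) ∂μ) ≤ avgOpNorm μ T :=
  le_ciSup (f := fun f : {f // UnitL2 f} => √(∫ σ, l2normSq (T σ f.1) ∂μ))
    ⟨C, Set.forall_mem_range.2 fun f => h f.1 f.2⟩ ⟨f, hf⟩

end AvgOpNorm

lemma carleson_avg_le_sum_sq_ip_haar1 (s : Finset D) (a : D → ℝ) (J : D) :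
    (len J)⁻¹ * ∑ I ∈ s.filter (fun I => ival I ⊆ ival J), a I ^ 2 * len I ≤
      ∑ I ∈ s, (a I * ip (haar1 J) (haar1 I)) ^ 2 := by
  rw [Finset.mul_sum]
  refine le_of_eq_of_le (Finset.sum_congr rfl fun I hI => ?_)
    (Finset.sum_le_sum_of_subset_of_nonneg (Finset.filter_subset _ _) fun I _ _ => sq_nonneg _)
  rw [ip_comm, ip_haar1_haar1_of_subset (Finset.mem_filter.1 hI).2, mul_pow, div_pow,
    Real.sq_sqrt (len_pos I).le, Real.sq_sqrt (len_pos J).le]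
  ring

lemma sqrt_sum_sq_ip_haar1_le_carlOn (s : Finset D) (a : D → ℝ) {f : ℝ → ℝ} (hf : UnitL2 f) :
    √(∑ I ∈ s, (a I * ip f (haar1 I)) ^ 2) ≤ √8 * carlOn s a := by
  have h := carleson_embedding (sum_filter_subset_le_carlOn_sq s a) hf.1
  rw [hf.integral_sq, mul_one] at h
  calc √(∑ I ∈ s, (a I * ip f (haar1 I)) ^ 2) ≤ √(8 * carlOn s a ^ 2) := Real.sqrt_le_sqrt h
    _ = √8 * carlOn s a := by
        rw [Real.sqrt_mul (by norm_num), Real.sqrt_sq (carlOn_nonneg s a)]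

/-- The averaged operator norm of `P^{1,0}_b P^{σ,0,1}_β` is equivalent to
the Carleson norm of the product sequence `{b_I β_I}`. -/
theorem statement4 :
    ∃ c C : ℝ, 0 < c ∧ 0 < C ∧ ∀ (b β : D →₀ ℝ) (μ : Measure (D → ℝ)), IsSignMeasure μ →
      c * carlOn (b.support ∩ β.support) (fun I => b I * β I) ≤
        avgOpNorm μ (fun σ f => P true false b (Psig σ false true β f)) ∧
      avgOpNorm μ (fun σ f => P true false b (Psig σ false true β f)) ≤
        C * carlOn (b.support ∩ β.support) (fun I => b I * β I) := by
  refine ⟨1, √8, one_pos, by positivity, fun b β μ hμ => ?_⟩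
  set s := b.support ∩ β.support
  set a : D → ℝ := fun I => b I * β I
  have hupper : ∀ f, UnitL2 f →
      √(∫ σ, l2normSq (P true false b (Psig σ false true β f)) ∂μ) ≤ √8 * carlOn s a :=
    fun f hf => by
      rw [integral_l2normSq_paraproduct_comp hμ]
      exact sqrt_sum_sq_ip_haar1_le_carlOn s a hf
  refine ⟨?_, avgOpNorm_le hupper⟩
  rw [one_mul]
  refine ciSup_le fun J => (Real.sqrt_le_sqrt ?_).trans (le_avgOpNorm hupper (unitL2_haar1 J))
  rw [integral_l2normSq_paraproduct_comp hμ]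
  exact carleson_avg_le_sum_sq_ip_haar1 s a J

end RandomParaproducts
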